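/- For every integer n ≥ 6, φ(C(n,3) + 1) ≤ n − 1. -/

import Mathlib

/-!
Write `m(e)` for the number of triangles of `𝒯` containing the edge `e`. On the indicator vector
`u` of `e`, the matrix `B = δ₁ᵀδ₁` satisfies `⟨u, Bu⟩ = m(e)` and `‖Bu‖² ≤ m(e)² + 2 m(e)`, because
two distinct edges lie together in at most one triangle; expanding `u` in an eigenbasis of `B`
then yields a positive eigenvalue at most `m(e) + 2`. So it suffices to find an edge with
`m(e) ≤ n - 3`. Otherwise every vertex has degree at least `n - 1` in `Γ₀(𝒯)`, and since
`|𝒯| > C(n,3)` there are at least `n + 1` vertices; double counting vertex–edge and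
edge–triangle incidences gives `(n-2)(n-1)(n+1) ≤ 6 |𝒯| = n(n-1)(n-2) + 6`, which fails for `n ≥ 5`.
-/

open Finset Matrix

/-- The sign `[T : e]` of an edge `e` in a triangle `T`. -/
noncomputable def triSign (T e : Finset ℕ) : ℝ :=
  if e ⊆ T ∧ e.card = 2 ∧ T.card = 3 then
    if (T \ e).max = T.max ∨ (T \ e).min = T.min then 1 else -1
  else 0

/-- A triangle family: a nonempty finite set of 3-element subsets of ℕ. -/
def IsTriFam (F : Finset (Finset ℕ)) : Prop :=
  F.Nonempty ∧ ∀ T ∈ F, T.card = 3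

/-- The edges of the support graph of a triangle family. -/
def edgesOf (F : Finset (Finset ℕ)) : Finset (Finset ℕ) :=
  F.biUnion fun T => T.powersetCard 2

/-- The vertices of the support graph of a triangle family. -/
def vertsOf (F : Finset (Finset ℕ)) : Finset ℕ :=
  F.biUnion id

/-- The signed edge-triangle incidence matrix of a triangle family. -/
noncomputable def delta1 (F : Finset (Finset ℕ)) :
    Matrix {T // T ∈ F} {e // e ∈ edgesOf F} ℝ :=
  Matrix.of fun T e => triSign T.1 e.1

/-- The smallest positive eigenvalue of a matrix. -/
noncomputable def lambdaMinPos {m : Type*} [Fintype m] (M : Matrix m m ℝ) : ℝ :=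
  sInf {μ : ℝ | 0 < μ ∧ ∃ v : m → ℝ, v ≠ 0 ∧ M.mulVec v = μ • v}

/-- `λ(𝒯)`: the smallest positive eigenvalue of `δ₁(𝒯)ᵀ δ₁(𝒯)`. -/
noncomputable def lam (F : Finset (Finset ℕ)) : ℝ :=
  lambdaMinPos ((delta1 F)ᵀ * delta1 F)

/-- The neighborhood of `x` in the support graph `Γ₀(F)`. -/
def nbrs (F : Finset (Finset ℕ)) (x : ℕ) : Finset ℕ :=
  (vertsOf F).filter fun y => x ≠ y ∧ ∃ T ∈ F, x ∈ T ∧ y ∈ T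

/-- `φ(t)`: the maximum of `λ(𝒯)` over triangle families with `|𝒯| = t`. -/
noncomputable def phi (t : ℕ) : ℝ :=
  sSup {r : ℝ | ∃ F : Finset (Finset ℕ), IsTriFam F ∧ F.card = t ∧ lam F = r}

/-- `Λ(t) = max_{1 ≤ s ≤ t} φ(s)`. -/
noncomputable def Lam (t : ℕ) : ℝ :=
  sSup {r : ℝ | ∃ s : ℕ, 1 ≤ s ∧ s ≤ t ∧ phi s = r}

/-- `H(n) = min{ s ≥ 1 : φ(C(n,3)+s) > n - 1 }`. -/
noncomputable def Hfun (n : ℕ) : ℕ :=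
  sInf {s : ℕ | 1 ≤ s ∧ (n : ℝ) - 1 < phi (n.choose 3 + s)}

/-- The triangle family `𝒯_{c,b}`: all 3-cliques of `K_c ∨ (b isolated vertices)`. -/
def Tcb (c b : ℕ) : Finset (Finset ℕ) :=
  ((Finset.Icc 1 c).powersetCard 3) ∪
    (Finset.Icc (c+1) (c+b)).biUnion
      (fun i => ((Finset.Icc 1 c).powersetCard 2).image (fun p => insert i p))

section EigenvalueBound

variable {m : Type*} [Fintype m]

lemma OrthonormalBasis.dotProduct_eq_sum (b : OrthonormalBasis m ℝ (EuclideanSpace ℝ m))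
    (x y : m → ℝ) : x ⬝ᵥ y = ∑ i, (⇑(b i) ⬝ᵥ x) * (⇑(b i) ⬝ᵥ y) := by
  have h := b.sum_inner_mul_inner (WithLp.toLp 2 x) (WithLp.toLp 2 y)
  simp only [PiLp.inner_apply, RCLike.inner_apply, conj_trivial] at h
  simpa [dotProduct, mul_comm] using h.symm

lemma Matrix.IsHermitian.eigenvectorBasis_dotProduct_mulVec [DecidableEq m] {A : Matrix m m ℝ}
    (hA : A.IsHermitian) (i : m) (u : m → ℝ) :
    ⇑(hA.eigenvectorBasis i) ⬝ᵥ (A *ᵥ u) = hA.eigenvalues i * (⇑(hA.eigenvectorBasis i) ⬝ᵥ u) := by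
  rw [dotProduct_mulVec, ← mulVec_transpose, ← conjTranspose_eq_transpose_of_trivial, hA.eq,
    hA.mulVec_eigenvectorBasis, smul_dotProduct, smul_eq_mul]

lemma exists_ne_zero_and_le_of_sum_sq_le {ev a : m → ℝ} {c : ℝ} (hev : ∀ i, 0 ≤ ev i)
    (hne : ∑ i, (ev i * a i) ^ 2 ≠ 0) (h : ∑ i, (ev i * a i) ^ 2 ≤ c * ∑ i, ev i * a i ^ 2) :
    ∃ i, ev i * a i ≠ 0 ∧ ev i ≤ c := by
  by_contra! hlt
  have hstrict : ∀ i, ev i * a i ≠ 0 → c * (ev i * a i ^ 2) < (ev i * a i) ^ 2 := by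
    intro i hi
    have hevi : 0 < ev i := (hev i).lt_of_ne (left_ne_zero_of_mul hi).symm
    have ha : 0 < a i ^ 2 := sq_pos_of_ne_zero (right_ne_zero_of_mul hi)
    nlinarith [mul_pos (sub_pos.mpr (hlt i hi)) (mul_pos hevi ha)]
  have hle : ∀ i, c * (ev i * a i ^ 2) ≤ (ev i * a i) ^ 2 := by
    intro i
    rcases eq_or_ne (ev i * a i) 0 with h0 | h0
    · rw [show ev i * a i ^ 2 = ev i * a i * a i by ring, h0]
      simp
    · exact (hstrict i h0).le
  obtain ⟨i₀, -, hi₀⟩ := exists_ne_zero_of_sum_ne_zero hne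
  have := sum_lt_sum (fun i _ => hle i)
    ⟨i₀, mem_univ _, hstrict i₀ (pow_ne_zero_iff two_ne_zero |>.mp hi₀)⟩
  rw [← mul_sum] at this
  linarith

lemma lambdaMinPos_le_of_dotProduct_le [DecidableEq m] {B : Matrix m m ℝ} (hB : B.PosSemidef)
    {u : m → ℝ} {c : ℝ} (hBu : B *ᵥ u ≠ 0) (h : (B *ᵥ u) ⬝ᵥ (B *ᵥ u) ≤ c * (u ⬝ᵥ B *ᵥ u)) :
    lambdaMinPos B ≤ c := by
  set b := hB.isHermitian.eigenvectorBasis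
  set ev := hB.isHermitian.eigenvalues
  set a : m → ℝ := fun i => ⇑(b i) ⬝ᵥ u
  have hcoord : ∀ i, ⇑(b i) ⬝ᵥ (B *ᵥ u) = ev i * a i :=
    fun i => hB.isHermitian.eigenvectorBasis_dotProduct_mulVec i u
  have hsq : (B *ᵥ u) ⬝ᵥ (B *ᵥ u) = ∑ i, (ev i * a i) ^ 2 := by
    rw [b.dotProduct_eq_sum]
    simp only [hcoord, sq]
  have hquad : u ⬝ᵥ B *ᵥ u = ∑ i, ev i * a i ^ 2 := by
    rw [b.dotProduct_eq_sum]
    exact sum_congr rfl fun i _ => by rw [hcoord]; ring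
  obtain ⟨i, hi, hic⟩ := exists_ne_zero_and_le_of_sum_sq_le hB.eigenvalues_nonneg
    (hsq ▸ dotProduct_self_eq_zero.not.mpr hBu) (hsq ▸ hquad ▸ h)
  have hev : 0 < ev i := (hB.eigenvalues_nonneg i).lt_of_ne (left_ne_zero_of_mul hi).symm
  refine csInf_le_of_le ⟨0, fun μ hμ => hμ.1.le⟩
    ⟨hev, ⇑(b i), ?_, hB.isHermitian.mulVec_eigenvectorBasis i⟩ hic
  exact (WithLp.ofLp_eq_zero 2).not.mpr (b.orthonormal.ne_zero i)

end EigenvalueBound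

def edgeMult (F : Finset (Finset ℕ)) (e : Finset ℕ) : ℕ := #{T ∈ F | e ⊆ T}

def supportDegree (F : Finset (Finset ℕ)) (x : ℕ) : ℕ := #{e ∈ edgesOf F | x ∈ e}

section Counting

variable {F : Finset (Finset ℕ)}

lemma mem_edgesOf {e : Finset ℕ} : e ∈ edgesOf F ↔ ∃ T ∈ F, e ⊆ T ∧ #e = 2 := by
  simp [edgesOf, mem_powersetCard]

lemma subset_vertsOf {T : Finset ℕ} (hT : T ∈ F) : T ⊆ vertsOf F :=
  subset_biUnion_of_mem id hT

lemma filter_edgesOf_subset {T : Finset ℕ} (hT : T ∈ F) :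
    {e ∈ edgesOf F | e ⊆ T} = T.powersetCard 2 := by
  ext e
  simp only [mem_filter, mem_powersetCard, mem_edgesOf]
  exact ⟨fun ⟨⟨_, _, _, he⟩, heT⟩ => ⟨heT, he⟩, fun ⟨heT, he⟩ => ⟨⟨T, hT, heT, he⟩, heT⟩⟩

lemma edgeMult_pos {e : Finset ℕ} (he : e ∈ edgesOf F) : 0 < edgeMult F e := by
  obtain ⟨T, hT, heT, -⟩ := mem_edgesOf.mp he
  exact card_pos.mpr ⟨T, mem_filter.mpr ⟨hT, heT⟩⟩

lemma sum_edgeMult (hF : ∀ T ∈ F, #T = 3) : ∑ e ∈ edgesOf F, edgeMult F e = 3 * #F := by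
  calc ∑ e ∈ edgesOf F, edgeMult F e = ∑ T ∈ F, #{e ∈ edgesOf F | e ⊆ T} :=
        sum_card_bipartiteAbove_eq_sum_card_bipartiteBelow _
    _ = ∑ T ∈ F, 3 := sum_congr rfl fun T hT => by
        rw [filter_edgesOf_subset hT, card_powersetCard, hF T hT]; rfl
    _ = 3 * #F := by rw [sum_const, smul_eq_mul, mul_comm]

lemma sum_supportDegree : ∑ x ∈ vertsOf F, supportDegree F x = 2 * #(edgesOf F) := by
  calc ∑ x ∈ vertsOf F, supportDegree F x = ∑ e ∈ edgesOf F, #{x ∈ vertsOf F | x ∈ e} :=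
        sum_card_bipartiteAbove_eq_sum_card_bipartiteBelow _
    _ = ∑ e ∈ edgesOf F, 2 := sum_congr rfl fun e he => by
        obtain ⟨T, hT, heT, he2⟩ := mem_edgesOf.mp he
        rw [filter_mem_eq_inter, inter_eq_right.mpr (heT.trans (subset_vertsOf hT)), he2]
    _ = 2 * #(edgesOf F) := by rw [sum_const, smul_eq_mul, mul_comm]

lemma exists_mem_edgesOf_of_mem_vertsOf (hF : ∀ T ∈ F, #T = 3) {x : ℕ} (hx : x ∈ vertsOf F) :
    ∃ e ∈ edgesOf F, x ∈ e := by
  obtain ⟨T, hT, hxT⟩ := mem_biUnion.mp hx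
  obtain ⟨y, hyT, hyx⟩ := exists_mem_ne (by rw [hF T hT]; norm_num : 1 < #T) x
  refine ⟨T.erase y, mem_edgesOf.mpr ⟨T, hT, erase_subset _ _, ?_⟩, mem_erase.mpr ⟨hyx.symm, hxT⟩⟩
  rw [card_erase_of_mem hyT, hF T hT]

-- With `y` the other endpoint of `e`, `T ↦ T.erase y` maps the triangles through `e`
-- injectively to edges at `x` other than `e`.
lemma edgeMult_lt_supportDegree (hF : ∀ T ∈ F, #T = 3) {e : Finset ℕ} {x : ℕ}
    (he : e ∈ edgesOf F) (hx : x ∈ e) : edgeMult F e < supportDegree F x := by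
  obtain ⟨-, -, -, he2⟩ := mem_edgesOf.mp he
  obtain ⟨y, hye, hyx⟩ := exists_mem_ne (by omega : 1 < #e) x
  have hmaps : ∀ T ∈ {T ∈ F | e ⊆ T}, T.erase y ∈ {e' ∈ edgesOf F | x ∈ e'}.erase e := by
    intro T hT
    obtain ⟨hTF, heT⟩ := mem_filter.mp hT
    refine mem_erase.mpr ⟨fun h => notMem_erase y T (h ▸ hye), mem_filter.mpr ⟨?_, ?_⟩⟩
    · refine mem_edgesOf.mpr ⟨T, hTF, erase_subset _ _, ?_⟩
      rw [card_erase_of_mem (heT hye), hF T hTF]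
    · exact mem_erase.mpr ⟨hyx.symm, heT hx⟩
  have hinj : Set.InjOn (fun T : Finset ℕ => T.erase y) ↑({T ∈ F | e ⊆ T}) := by
    intro T hT T' hT' h
    rw [← insert_erase ((mem_filter.mp hT).2 hye), ← insert_erase ((mem_filter.mp hT').2 hye)]
    exact congrArg (insert y) h
  have hmem : e ∈ {e' ∈ edgesOf F | x ∈ e'} := mem_filter.mpr ⟨he, hx⟩
  calc edgeMult F e ≤ #({e' ∈ edgesOf F | x ∈ e'}.erase e) := card_le_card_of_injOn _ hmaps hinj
    _ < supportDegree F x := card_erase_lt_of_mem hmem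

lemma card_le_choose_card_vertsOf (hF : ∀ T ∈ F, #T = 3) : #F ≤ (#(vertsOf F)).choose 3 := by
  rw [← card_powersetCard]
  exact card_le_card fun T hT => mem_powersetCard.mpr ⟨subset_vertsOf hT, hF T hT⟩

lemma exists_edgeMult_add_three_le (hF : ∀ T ∈ F, #T = 3) {n : ℕ} (hn : 5 ≤ n)
    (hcard : #F = n.choose 3 + 1) : ∃ e ∈ edgesOf F, edgeMult F e + 3 ≤ n := by
  by_contra! hmult
  have hV : n < #(vertsOf F) := by
    by_contra! h
    have := (card_le_choose_card_vertsOf hF).trans (Nat.choose_le_choose 3 h)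
    omega
  have hdeg : ∀ x ∈ vertsOf F, n ≤ supportDegree F x + 1 := fun x hx => by
    obtain ⟨e, he, hxe⟩ := exists_mem_edgesOf_of_mem_vertsOf hF hx
    have := edgeMult_lt_supportDegree hF he hxe
    have := hmult e he
    omega
  have hVE : #(vertsOf F) * n ≤ 2 * #(edgesOf F) + #(vertsOf F) := by
    have := card_nsmul_le_sum _ _ _ hdeg
    rw [sum_add_distrib, sum_supportDegree, sum_const, smul_eq_mul, smul_eq_mul, mul_one] at this
    exact this
  have hEF : #(edgesOf F) * n ≤ 3 * #F + 2 * #(edgesOf F) := by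
    have := card_nsmul_le_sum _ _ _ fun e he =>
      (by have := hmult e he; omega : n ≤ edgeMult F e + 2)
    rw [sum_add_distrib, sum_edgeMult hF, sum_const, smul_eq_mul, smul_eq_mul] at this
    linarith
  have hchoose : 6 * n.choose 3 = n * (n - 1) * (n - 2) := by
    have := Nat.descFactorial_eq_factorial_mul_choose n 3
    simp [Nat.descFactorial_succ, Nat.factorial] at this
    linarith
  obtain ⟨k, rfl⟩ := Nat.exists_eq_add_of_le hn
  rw [hcard] at hEF
  simp only [show 5 + k - 1 = 4 + k by omega, show 5 + k - 2 = 3 + k by omega] at hchoose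
  have h1 : (4 + k) * (6 + k) ≤ 2 * #(edgesOf F) := by nlinarith
  have h2 : (3 + k) * (2 * #(edgesOf F)) ≤ 6 * (5 + k).choose 3 + 6 := by nlinarith
  nlinarith

end Counting

section IncidenceMatrix

variable {F : Finset (Finset ℕ)}

lemma triSign_eq_zero_of_not_subset {T e : Finset ℕ} (h : ¬e ⊆ T) : triSign T e = 0 := by
  rw [triSign, if_neg fun h' => h h'.1]

lemma triSign_sq_le_one (T e : Finset ℕ) : triSign T e ^ 2 ≤ 1 := by
  unfold triSign
  split_ifs <;> norm_num

lemma triSign_sq {T e : Finset ℕ} (he : e ⊆ T) (he2 : #e = 2) (hT : #T = 3) :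
    triSign T e ^ 2 = 1 := by
  rw [triSign, if_pos ⟨he, he2, hT⟩]
  split_ifs <;> norm_num

lemma eq_union_of_card_eq_two {T e e' : Finset ℕ} (hT : #T = 3) (he : #e = 2) (he' : #e' = 2)
    (hne : e ≠ e') (h : e ⊆ T) (h' : e' ⊆ T) : T = e ∪ e' := by
  have hlt : e ⊂ e ∪ e' := subset_union_left.ssubset_of_not_subset fun hsub =>
    hne (eq_of_subset_of_card_le (union_subset_right hsub) (by rw [he, he'])).symm
  have := card_lt_card hlt
  exact (eq_of_subset_of_card_le (union_subset h h') (by omega)).symm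

lemma delta1_transpose_mul_self_posSemidef (F : Finset (Finset ℕ)) :
    ((delta1 F)ᵀ * delta1 F).PosSemidef := by
  simpa only [conjTranspose_eq_transpose_of_trivial] using
    posSemidef_conjTranspose_mul_self (delta1 F)

lemma delta1_transpose_mul_self_apply (e' e : {e // e ∈ edgesOf F}) :
    ((delta1 F)ᵀ * delta1 F) e' e = ∑ T ∈ F, triSign T e' * triSign T e :=
  (sum_coe_sort F fun T => triSign T e' * triSign T e)

lemma sum_triSign_mul_self (hF : ∀ T ∈ F, #T = 3) {e : Finset ℕ} (he : e ∈ edgesOf F) :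
    ∑ T ∈ F, triSign T e * triSign T e = edgeMult F e := by
  obtain ⟨-, -, -, he2⟩ := mem_edgesOf.mp he
  rw [edgeMult, card_eq_sum_ones, Nat.cast_sum, sum_filter]
  refine sum_congr rfl fun T hT => ?_
  split_ifs with heT
  · rw [← sq, triSign_sq heT he2 (hF T hT), Nat.cast_one]
  · rw [triSign_eq_zero_of_not_subset heT, zero_mul]

-- Two distinct edges lie together in at most one triangle, namely their union.
lemma sq_sum_triSign_mul_le (hF : ∀ T ∈ F, #T = 3) {e e' : Finset ℕ} (he : e ∈ edgesOf F)
    (he' : e' ∈ edgesOf F) (hne : e' ≠ e) :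
    (∑ T ∈ F, triSign T e' * triSign T e) ^ 2 ≤ #{T ∈ F | e ⊆ T ∧ e' ⊆ T} := by
  obtain ⟨-, -, -, he2⟩ := mem_edgesOf.mp he
  obtain ⟨-, -, -, he'2⟩ := mem_edgesOf.mp he'
  have hsum : ∑ T ∈ F, triSign T e' * triSign T e = ∑ T ∈ F with e ⊆ T ∧ e' ⊆ T,
      triSign T e' * triSign T e := by
    refine (sum_filter_of_ne fun T _ hT => ⟨?_, ?_⟩).symm
    · exact not_not.mp fun h => hT (by rw [triSign_eq_zero_of_not_subset h, mul_zero])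
    · exact not_not.mp fun h => hT (by rw [triSign_eq_zero_of_not_subset h, zero_mul])
  have hsub : {T ∈ F | e ⊆ T ∧ e' ⊆ T} ⊆ {e ∪ e'} := fun T hT => by
    obtain ⟨hTF, heT, he'T⟩ := mem_filter.mp hT
    exact mem_singleton.mpr (eq_union_of_card_eq_two (hF T hTF) he2 he'2 hne.symm heT he'T)
  rw [hsum]
  rcases subset_singleton_iff.mp hsub with h | h
  · simp [h]
  · rw [h, sum_singleton, card_singleton, Nat.cast_one, mul_pow]
    exact mul_le_one₀ (triSign_sq_le_one _ _) (sq_nonneg _) (triSign_sq_le_one _ _)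

lemma sum_card_filter_subset_erase (hF : ∀ T ∈ F, #T = 3) {e : Finset ℕ}
    (he : e ∈ edgesOf F) :
    ∑ e' ∈ (edgesOf F).erase e, #{T ∈ F | e ⊆ T ∧ e' ⊆ T} = 2 * edgeMult F e := by
  obtain ⟨-, -, -, he2⟩ := mem_edgesOf.mp he
  calc ∑ e' ∈ (edgesOf F).erase e, #{T ∈ F | e ⊆ T ∧ e' ⊆ T}
      = ∑ T ∈ F with e ⊆ T, #{e' ∈ (edgesOf F).erase e | e' ⊆ T} := by
        simp only [← filter_filter]
        exact sum_card_bipartiteAbove_eq_sum_card_bipartiteBelow _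
    _ = ∑ T ∈ F with e ⊆ T, 2 := sum_congr rfl fun T hT => by
        obtain ⟨hTF, heT⟩ := mem_filter.mp hT
        rw [filter_erase, filter_edgesOf_subset hTF,
          card_erase_of_mem (mem_powersetCard.mpr ⟨heT, he2⟩), card_powersetCard, hF T hTF]
        rfl
    _ = 2 * edgeMult F e := by rw [sum_const, smul_eq_mul, mul_comm, edgeMult]

lemma lam_le_edgeMult_add_two (hF : ∀ T ∈ F, #T = 3) {e : Finset ℕ} (he : e ∈ edgesOf F) :
    lam F ≤ edgeMult F e + 2 := by
  set B := (delta1 F)ᵀ * delta1 F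
  set m : ℝ := (edgeMult F e : ℝ)
  set u : {e // e ∈ edgesOf F} → ℝ := Pi.single ⟨e, he⟩ 1
  set g : Finset ℕ → ℝ := fun e' => ∑ T ∈ F, triSign T e' * triSign T e
  have hm : 0 < m := Nat.cast_pos.mpr (edgeMult_pos he)
  have hBu : ∀ e', (B *ᵥ u) e' = g e' := fun e' => by
    rw [mulVec_single_one, col_apply]
    exact delta1_transpose_mul_self_apply e' ⟨e, he⟩
  have hBue : (B *ᵥ u) ⟨e, he⟩ = m := (hBu _).trans (sum_triSign_mul_self hF he)
  have hnorm : (B *ᵥ u) ⬝ᵥ (B *ᵥ u) ≤ m ^ 2 + 2 * m :=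
    calc (B *ᵥ u) ⬝ᵥ (B *ᵥ u) = ∑ e' ∈ edgesOf F, g e' ^ 2 := by
          simp only [dotProduct, hBu, ← sq]
          exact sum_coe_sort (edgesOf F) fun e' => g e' ^ 2
      _ = g e ^ 2 + ∑ e' ∈ (edgesOf F).erase e, g e' ^ 2 := (add_sum_erase _ _ he).symm
      _ ≤ m ^ 2 + ∑ e' ∈ (edgesOf F).erase e, (#{T ∈ F | e ⊆ T ∧ e' ⊆ T} : ℝ) := by
          rw [show g e = m from sum_triSign_mul_self hF he]
          gcongr with e' he'
          exact sq_sum_triSign_mul_le hF he (mem_of_mem_erase he') (ne_of_mem_erase he')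
      _ = m ^ 2 + 2 * m := by
          rw [← Nat.cast_sum, sum_card_filter_subset_erase hF he]
          push_cast
          rfl
  refine lambdaMinPos_le_of_dotProduct_le (delta1_transpose_mul_self_posSemidef F)
    (fun h => hm.ne' (by rw [← hBue, h, Pi.zero_apply])) ?_
  rw [single_dotProduct, one_mul, hBue]
  linarith

end IncidenceMatrix

/-- For every `n ≥ 6`, `φ(C(n,3) + 1) ≤ n - 1`. -/
theorem stmt11 (n : ℕ) (hn : 6 ≤ n) : phi (n.choose 3 + 1) ≤ (n : ℝ) - 1 := by
  have hn' : (6 : ℝ) ≤ n := by exact_mod_cast hn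
  refine Real.sSup_le ?_ (by linarith)
  rintro _ ⟨F, hF, hcard, rfl⟩
  obtain ⟨e, he, hmult⟩ := exists_edgeMult_add_three_le hF.2 (by omega) hcard
  have hmult' : (edgeMult F e : ℝ) + 3 ≤ n := by exact_mod_cast hmult
  calc lam F ≤ edgeMult F e + 2 := lam_le_edgeMult_add_two hF.2 he
    _ ≤ n - 1 := by linarith
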